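/- arXiv:2510.02128 — 4 statements merged into one kernel-verified Lean document; each statement's English description precedes it below -/
import Mathlib

section
/- Correctness of speculative sampling: let p and q be probability mass functions on a finite set V with acceptance rate α := Σ_{x∈V} min(p(x), q(x)) < 1, and let p′(x) := max(p(x) − q(x), 0)/(1 − α). Then for every x′ ∈ V, the probability that speculative sampling outputs x′ equals p(x′); that is, min(p(x′), q(x′)) + (1 − α)·p′(x′) = p(x′). Moreover p′ is itself a probability mass function on V. -/
/-- Correctness of speculative sampling: with acceptance rate
`α := ∑ x, min (p x) (q x) < 1` and residual distribution
`p' x := max (p x - q x) 0 / (1 - α)`, for every token `x'` the probability that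
speculative sampling outputs `x'` equals `p x'`, i.e.
`min (p x') (q x') + (1 - α) * p' x' = p x'`; moreover `p'` is itself a probability
mass function on `V`. -/
theorem speculative_sampling_correct {V : Type*} [Fintype V]
    (p q : V → ℝ)
    (hp0 : ∀ x, 0 ≤ p x) (hq0 : ∀ x, 0 ≤ q x)
    (hp1 : ∑ x, p x = 1) (hq1 : ∑ x, q x = 1)
    (α : ℝ) (hα : α = ∑ x, min (p x) (q x)) (hα1 : α < 1)
    (p' : V → ℝ) (hp' : ∀ x, p' x = max (p x - q x) 0 / (1 - α)) :
    (∀ x' : V, min (p x') (q x') + (1 - α) * p' x' = p x') ∧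
    (∀ x : V, 0 ≤ p' x) ∧ ∑ x, p' x = 1 := by
  have h1α : (0:ℝ) < 1 - α := by linarith
  refine ⟨fun x => ?_, fun x => ?_, ?_⟩
  · rw [hp' x, mul_div_cancel₀ _ (ne_of_gt h1α)]
    rcases le_total (p x) (q x) with h | h
    · rw [min_eq_left h, max_eq_right (by linarith)]; ring
    · rw [min_eq_right h, max_eq_left (by linarith)]; ring
  · rw [hp' x]
    exact div_nonneg (le_max_right _ _) h1α.le
  · have : ∑ x, p' x = (∑ x, max (p x - q x) 0) / (1 - α) := by
      rw [Finset.sum_div]; exact Finset.sum_congr rfl fun x _ => hp' x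
    rw [this, div_eq_one_iff_eq (ne_of_gt h1α)]
    have key : ∀ x, max (p x - q x) 0 = p x - min (p x) (q x) := fun x => by
      rcases le_total (p x) (q x) with h | h
      · rw [min_eq_left h, max_eq_right (by linarith)]; ring
      · rw [min_eq_right h, max_eq_left (by linarith)]
    simp_rw [key, Finset.sum_sub_distrib, hp1, hα]
end

section
/- Monotone chain from divergence to task speed-up (Theorem 1): let T be a probability measure over prefixes, and for each prefix s let p(·|s), q(·|s) be probability mass functions on a finite set V with q(x|s) > 0 whenever p(x|s) > 0, such that α(s) := Σ_{x∈V} min(p(x|s), q(x|s)) < 1 and moreover KL_T ≤ 2 and D_T ≤ 2 so that the arguments below lie in [0,1). Fix an integer γ ≥ 1 and c ∈ [0,1), and set S_T := E_{s∼T}[ f_γ(α(s)) / (1 + γc) ], α_T := E_{s∼T}[α(s)], KL_T := E_{s∼T}[KL(p(·|s)‖q(·|s))], and D_T := E_{s∼T}[ −Σ_{x∈V} p(x|s) log q(x|s) ]. Then S_T ≥ f_γ(α_T)/(1 + γc) ≥ f_γ(1 − √(KL_T/2))/(1 + γc) ≥ f_γ(1 − √(D_T/2))/(1 + γc). -/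
/-!
Jensen's inequality for the convex polynomial `f_γ` on `[0, ∞)` gives `S_T ≥ f_γ(α_T)/(1 + γc)`.
For a single prefix, `1 - α(s)` is the total variation distance `p(A) - q(A)` with
`A = {p > q}`; coarse-graining `V` into `A` and its complement can only decrease the KL divergence
(log-sum inequality), and the binary Pinsker inequality then gives `2 (1 - α(s))² ≤ KL(s)`.
Averaging over `T` and Jensen for the square yield `1 - √(KL_T/2) ≤ α_T`, and `f_γ` is monotone
on `[0, ∞)`. Finally `KL ≤ H(p, q)` prefix by prefix, since the entropy of `p` is nonnegative.
-/

open MeasureTheory Finset Real Set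

theorem convexOn_sum_range_pow {𝕜 : Type*} [Field 𝕜] [LinearOrder 𝕜] [IsStrictOrderedRing 𝕜]
    (n : ℕ) : ConvexOn 𝕜 (Ici 0) fun x : 𝕜 ↦ ∑ k ∈ range n, x ^ k := by
  induction n with
  | zero => simpa using convexOn_const (0 : 𝕜) (convex_Ici 0)
  | succ n ih =>
    simp only [sum_range_succ]
    exact ih.add (convexOn_pow n)

theorem sq_integral_le_integral_sq {Ω : Type*} [MeasurableSpace Ω] {μ : Measure Ω}
    [IsProbabilityMeasure μ] {f : Ω → ℝ} (hf : Integrable f μ)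
    (hf2 : Integrable (fun x ↦ f x ^ 2) μ) : (∫ x, f x ∂μ) ^ 2 ≤ ∫ x, f x ^ 2 ∂μ :=
  even_two.convexOn_pow.map_integral_le (continuous_pow 2).continuousOn isClosed_univ
    (by simp) hf hf2

theorem one_sub_integral_le_sqrt_integral_div_two {Ω : Type*} [MeasurableSpace Ω]
    {μ : Measure Ω} [IsProbabilityMeasure μ] {a d : Ω → ℝ} (ha : Integrable a μ)
    (hd : Integrable d μ) (had : ∀ x, 2 * (1 - a x) ^ 2 ≤ d x) :
    1 - ∫ x, a x ∂μ ≤ √((∫ x, d x ∂μ) / 2) := by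
  have hsub : Integrable (fun x ↦ 1 - a x) μ := (integrable_const 1).sub ha
  have hsq : Integrable (fun x ↦ (1 - a x) ^ 2) μ :=
    (hd.div_const 2).mono' (hsub.aestronglyMeasurable.pow 2) <| .of_forall fun x ↦ by
      rw [Real.norm_of_nonneg (sq_nonneg _)]; linarith [had x]
  have hsq_le : (1 - ∫ x, a x ∂μ) ^ 2 ≤ (∫ x, d x ∂μ) / 2 :=
    calc (1 - ∫ x, a x ∂μ) ^ 2 = (∫ x, (1 - a x) ∂μ) ^ 2 := by
          rw [integral_sub (integrable_const 1) ha, integral_const]; simp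
      _ ≤ ∫ x, (1 - a x) ^ 2 ∂μ := sq_integral_le_integral_sq hsub hsq
      _ ≤ ∫ x, d x / 2 ∂μ := integral_mono hsq (hd.div_const 2) fun x ↦ by linarith [had x]
      _ = (∫ x, d x ∂μ) / 2 := integral_div 2 d
  exact (le_abs_self _).trans (abs_le_sqrt hsq_le)

theorem sum_mul_log_div_sum_le_sum_mul_log_div {ι : Type*} (t : Finset ι) {p q : ι → ℝ}
    (hp : ∀ i ∈ t, 0 ≤ p i) (hq : ∀ i ∈ t, 0 ≤ q i) (hpq : ∀ i ∈ t, 0 < p i → 0 < q i) :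
    (∑ i ∈ t, p i) * log ((∑ i ∈ t, p i) / ∑ i ∈ t, q i) ≤ ∑ i ∈ t, p i * log (p i / q i) := by
  have hqp : ∀ i ∈ t, q i * (p i / q i) = p i := fun i hi ↦ by
    rcases (hq i hi).eq_or_lt with h | h
    · have : p i = 0 := ((hp i hi).eq_of_not_lt fun hp' ↦ (hpq i hi hp').ne h).symm
      simp [← h, this]
    · field_simp
  set Q := ∑ i ∈ t, q i
  rcases (sum_nonneg hq).eq_or_lt with hQ | hQ
  · have hp0 : ∀ i ∈ t, p i = 0 := fun i hi ↦ by
      rw [← hqp i hi, (sum_eq_zero_iff_of_nonneg hq).1 hQ.symm i hi, zero_mul]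
    rw [sum_eq_zero hp0, sum_eq_zero fun i hi ↦ by rw [hp0 i hi, zero_mul], zero_mul]
  -- Jensen for `x log x` with weights `q i / Q` at the points `p i / q i`.
  have := convexOn_mul_log.map_sum_le (t := t) (w := fun i ↦ q i / Q) (p := fun i ↦ p i / q i)
    (fun i hi ↦ div_nonneg (hq i hi) hQ.le) (by rw [← sum_div, div_self hQ.ne'])
    (fun i hi ↦ div_nonneg (hp i hi) (hq i hi))
  have hmean : ∑ i ∈ t, q i / Q * (p i / q i) = (∑ i ∈ t, p i) / Q := by
    rw [sum_div]; exact sum_congr rfl fun i hi ↦ by rw [div_mul_eq_mul_div, hqp i hi]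
  have hvalue : ∑ i ∈ t, q i / Q * (p i / q i * log (p i / q i)) =
      (∑ i ∈ t, p i * log (p i / q i)) / Q := by
    rw [sum_div]
    exact sum_congr rfl fun i hi ↦ by
      rw [← mul_assoc, div_mul_eq_mul_div, hqp i hi, div_mul_eq_mul_div]
  simp only [smul_eq_mul, hmean, hvalue] at this
  rwa [div_mul_eq_mul_div, div_le_div_iff_of_pos_right hQ] at this

noncomputable def binaryKL (a b : ℝ) : ℝ :=
  a * log (a / b) + (1 - a) * log ((1 - a) / (1 - b))

theorem two_mul_sq_sub_le_binaryKL {a b : ℝ} (hb : 0 < b) (hba : b ≤ a) (ha : a ≤ 1) :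
    2 * (a - b) ^ 2 ≤ binaryKL a b := by
  -- `binaryKL a t - 2 (a - t)²` decreases in `t` on `[b, a]` and vanishes at `t = a`.
  set h : ℝ → ℝ := fun t ↦ -(a * log t) - (1 - a) * log (1 - t) - 2 * (a - t) ^ 2
  have hcont : ContinuousOn h (Icc b a) := by
    have hlog : ContinuousOn (fun t ↦ (1 - a) * log (1 - t)) (Icc b a) := by
      rcases ha.lt_or_eq with ha1 | rfl
      · exact continuousOn_const.mul <| (continuousOn_const.sub continuousOn_id).log
          fun t ht ↦ (sub_pos.2 (ht.2.trans_lt ha1)).ne'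
      · simpa using continuousOn_const
    exact ((continuousOn_id.log fun t ht ↦ (hb.trans_le ht.1).ne').const_smul a).neg.sub hlog
      |>.sub (by fun_prop)
  have hderiv : ∀ t ∈ Ioo b a,
      HasDerivAt h (-((a - t) * (1 - 2 * t) ^ 2 / (t * (1 - t)))) t := fun t ht ↦ by
    have ht0 : 0 < t := hb.trans ht.1
    have ht1 : 0 < 1 - t := by linarith [ht.2]
    have := (((hasDerivAt_log ht0.ne').const_mul a).neg.sub
      (((hasDerivAt_log ht1.ne').comp t ((hasDerivAt_id t).const_sub 1)).const_mul (1 - a))).sub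
      (((hasDerivAt_id t).const_sub a).pow 2 |>.const_mul 2)
    refine this.congr_deriv ?_
    simp only [id_eq]
    field_simp
    ring
  have hanti : AntitoneOn h (Icc b a) := by
    refine antitoneOn_of_hasDerivWithinAt_nonpos (convex_Icc b a) hcont
      (fun t ht ↦ (hderiv t (by rwa [interior_Icc] at ht)).hasDerivWithinAt) fun t ht ↦ ?_
    rw [interior_Icc] at ht
    have ht0 : 0 < t := hb.trans ht.1
    have ht1 : 0 < 1 - t := by linarith [ht.2]
    exact neg_nonpos.2 <| div_nonneg (mul_nonneg (by linarith [ht.2]) (sq_nonneg _)) (by positivity)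
  have hmono := hanti ⟨le_rfl, hba⟩ ⟨hba, le_rfl⟩ hba
  have hsplit : binaryKL a b = -h a + h b + 2 * (a - b) ^ 2 := by
    rcases ha.lt_or_eq with ha1 | rfl
    · have hb1 : 1 - b ≠ 0 := by linarith
      simp only [binaryKL, h, log_div (hb.trans_le hba).ne' hb.ne',
        log_div (sub_pos.2 ha1).ne' hb1]
      ring
    · simp [binaryKL, h]
  linarith

section FiniteDistributions

variable {V : Type*} [Fintype V] {p q : V → ℝ}

theorem binaryKL_sum_le_sum_mul_log_div (hp0 : ∀ x, 0 ≤ p x) (hq0 : ∀ x, 0 ≤ q x)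
    (hp1 : ∑ x, p x = 1) (hq1 : ∑ x, q x = 1) (hpq : ∀ x, 0 < p x → 0 < q x) (A : Finset V) :
    binaryKL (∑ x ∈ A, p x) (∑ x ∈ A, q x) ≤ ∑ x, p x * log (p x / q x) := by
  classical
  have hcompl : ∀ f : V → ℝ, ∑ x, f x = 1 → 1 - ∑ x ∈ A, f x = ∑ x ∈ Aᶜ, f x := fun f hf ↦ by
    rw [← hf, ← sum_add_sum_compl A f, add_sub_cancel_left]
  rw [binaryKL, hcompl p hp1, hcompl q hq1, ← sum_add_sum_compl A]
  exact add_le_add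
    (sum_mul_log_div_sum_le_sum_mul_log_div A (fun x _ ↦ hp0 x) (fun x _ ↦ hq0 x) fun x _ ↦ hpq x)
    (sum_mul_log_div_sum_le_sum_mul_log_div _ (fun x _ ↦ hp0 x) (fun x _ ↦ hq0 x) fun x _ ↦ hpq x)

theorem two_mul_sq_one_sub_sum_min_le_sum_mul_log_div (hp0 : ∀ x, 0 ≤ p x)
    (hq0 : ∀ x, 0 ≤ q x) (hp1 : ∑ x, p x = 1) (hq1 : ∑ x, q x = 1)
    (hpq : ∀ x, 0 < p x → 0 < q x) :
    2 * (1 - ∑ x, min (p x) (q x)) ^ 2 ≤ ∑ x, p x * log (p x / q x) := by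
  classical
  set A := univ.filter fun x ↦ q x < p x
  have htv : 1 - ∑ x, min (p x) (q x) = ∑ x ∈ A, p x - ∑ x ∈ A, q x := by
    rw [← hp1, ← sum_sub_distrib, ← sum_sub_distrib, sum_filter]
    refine sum_congr rfl fun x _ ↦ ?_
    split_ifs with h
    · rw [min_eq_right h.le]
    · rw [min_eq_left (not_lt.1 h), sub_self]
  have hKL := binaryKL_sum_le_sum_mul_log_div hp0 hq0 hp1 hq1 hpq A
  rw [htv]
  rcases A.eq_empty_or_nonempty with hA | hA
  · simpa [hA, binaryKL] using hKL
  refine (two_mul_sq_sub_le_binaryKL ?_ ?_ ?_).trans hKL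
  · exact sum_pos (fun x hx ↦ hpq x ((hq0 x).trans_lt (mem_filter.1 hx).2)) hA
  · exact sum_le_sum fun x hx ↦ (mem_filter.1 hx).2.le
  · exact hp1 ▸ sum_le_univ_sum_of_nonneg hp0

theorem sum_mul_log_div_le_neg_sum_mul_log (hp0 : ∀ x, 0 ≤ p x) (hp1 : ∑ x, p x = 1) :
    ∑ x, p x * log (p x / q x) ≤ -∑ x, p x * log (q x) := by
  rw [← sum_neg_distrib]
  refine sum_le_sum fun x _ ↦ ?_
  rcases (hp0 x).eq_or_lt with hp | hp
  · simp [← hp]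
  rcases eq_or_ne (q x) 0 with hq | hq
  · simp [hq]
  have hlog : log (p x) ≤ 0 :=
    log_nonpos (hp0 x) (hp1 ▸ single_le_sum (fun y _ ↦ hp0 y) (mem_univ x))
  rw [log_div hp.ne' hq, mul_sub]
  linarith [mul_nonpos_of_nonneg_of_nonpos (hp0 x) hlog]

end FiniteDistributions

theorem monotone_chain_divergence_speedup_general {Ω : Type*} [MeasurableSpace Ω]
    (T : Measure Ω) [IsProbabilityMeasure T]
    {V : Type*} [Fintype V]
    (p q : Ω → V → ℝ)
    (hp0 : ∀ s x, 0 ≤ p s x) (hq0 : ∀ s x, 0 ≤ q s x)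
    (hp1 : ∀ s, ∑ x, p s x = 1) (hq1 : ∀ s, ∑ x, q s x = 1)
    (hac : ∀ s x, 0 < p s x → 0 < q s x)
    (γ : ℕ) (c : ℝ) (hc0 : 0 ≤ c)
    (α : Ω → ℝ) (hα : ∀ s, α s = ∑ x, min (p s x) (q s x))
    (S_T : ℝ)
    (hS : S_T = ∫ s, (∑ k ∈ Finset.range (γ + 1), α s ^ k) / (1 + (γ : ℝ) * c) ∂T)
    (α_T : ℝ) (hαT : α_T = ∫ s, α s ∂T)
    (KL_T : ℝ) (hKL : KL_T = ∫ s, ∑ x, p s x * Real.log (p s x / q s x) ∂T)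
    (D_T : ℝ) (hD : D_T = ∫ s, -∑ x, p s x * Real.log (q s x) ∂T)
    (hKL2 : KL_T ≤ 2) (hD2 : D_T ≤ 2)
    (hintα : Integrable α T)
    (hintf : Integrable (fun s => ∑ k ∈ Finset.range (γ + 1), α s ^ k) T)
    (hintKL : Integrable (fun s => ∑ x, p s x * Real.log (p s x / q s x)) T)
    (hintD : Integrable (fun s => -∑ x, p s x * Real.log (q s x)) T) :
    S_T ≥ (∑ k ∈ Finset.range (γ + 1), α_T ^ k) / (1 + (γ : ℝ) * c) ∧
    (∑ k ∈ Finset.range (γ + 1), α_T ^ k) / (1 + (γ : ℝ) * c) ≥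
      (∑ k ∈ Finset.range (γ + 1), (1 - Real.sqrt (KL_T / 2)) ^ k) / (1 + (γ : ℝ) * c) ∧
    (∑ k ∈ Finset.range (γ + 1), (1 - Real.sqrt (KL_T / 2)) ^ k) / (1 + (γ : ℝ) * c) ≥
      (∑ k ∈ Finset.range (γ + 1), (1 - Real.sqrt (D_T / 2)) ^ k) / (1 + (γ : ℝ) * c) := by
  have hden : 0 ≤ 1 + (γ : ℝ) * c := by positivity
  have hα0 : ∀ s, 0 ≤ α s := fun s ↦ hα s ▸ sum_nonneg fun x _ ↦ le_min (hp0 s x) (hq0 s x)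
  have hjensen : ∑ k ∈ range (γ + 1), α_T ^ k ≤ ∫ s, ∑ k ∈ range (γ + 1), α s ^ k ∂T :=
    hαT ▸ (convexOn_sum_range_pow (γ + 1)).map_integral_le (by fun_prop) isClosed_Ici
      (.of_forall hα0) hintα hintf
  have hpinsker : 1 - √(KL_T / 2) ≤ α_T := by
    have := one_sub_integral_le_sqrt_integral_div_two hintα hintKL fun s ↦ hα s ▸
      two_mul_sq_one_sub_sum_min_le_sum_mul_log_div (hp0 s) (hq0 s) (hp1 s) (hq1 s) (hac s)
    rw [hαT, hKL]
    linarith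
  have hKL_D : KL_T ≤ D_T := hKL ▸ hD ▸ integral_mono hintKL hintD fun s ↦
    sum_mul_log_div_le_neg_sum_mul_log (hp0 s) (hp1 s)
  have hKLroot : 0 ≤ 1 - √(KL_T / 2) := sub_nonneg.2 (sqrt_le_one.2 (by linarith))
  have hDroot : 0 ≤ 1 - √(D_T / 2) := sub_nonneg.2 (sqrt_le_one.2 (by linarith))
  refine ⟨?_, ?_, ?_⟩
  · rw [hS, integral_div]
    gcongr
  · gcongr
  · gcongr

/-- Monotone chain from divergence to task speed-up (Theorem 1): with
`α(s) := ∑ x, min (p s x) (q s x) < 1`, `f_γ(a) := ∑_{k=0}^{γ} a^k`,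
`S_T := E_{s∼T}[f_γ(α(s)) / (1 + γc)]`, `α_T := E_{s∼T}[α(s)]`,
`KL_T := E_{s∼T}[KL(p(·|s)‖q(·|s))]`, `D_T := E_{s∼T}[-∑ x, p s x * log (q s x)]`,
and assuming `KL_T ≤ 2` and `D_T ≤ 2` (so the square-root arguments lie in `[0,1)`),
`S_T ≥ f_γ(α_T)/(1+γc) ≥ f_γ(1 - √(KL_T/2))/(1+γc) ≥ f_γ(1 - √(D_T/2))/(1+γc)`. -/
theorem monotone_chain_divergence_speedup {Ω : Type*} [MeasurableSpace Ω]
    (T : Measure Ω) [IsProbabilityMeasure T]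
    {V : Type*} [Fintype V]
    (p q : Ω → V → ℝ)
    (hp0 : ∀ s x, 0 ≤ p s x) (hq0 : ∀ s x, 0 ≤ q s x)
    (hp1 : ∀ s, ∑ x, p s x = 1) (hq1 : ∀ s, ∑ x, q s x = 1)
    (hac : ∀ s x, 0 < p s x → 0 < q s x)
    (γ : ℕ) (hγ : 1 ≤ γ) (c : ℝ) (hc0 : 0 ≤ c) (hc1 : c < 1)
    (α : Ω → ℝ) (hα : ∀ s, α s = ∑ x, min (p s x) (q s x))
    (hαlt : ∀ s, α s < 1)
    (S_T : ℝ)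
    (hS : S_T = ∫ s, (∑ k ∈ Finset.range (γ + 1), α s ^ k) / (1 + (γ : ℝ) * c) ∂T)
    (α_T : ℝ) (hαT : α_T = ∫ s, α s ∂T)
    (KL_T : ℝ) (hKL : KL_T = ∫ s, ∑ x, p s x * Real.log (p s x / q s x) ∂T)
    (D_T : ℝ) (hD : D_T = ∫ s, -∑ x, p s x * Real.log (q s x) ∂T)
    (hKL2 : KL_T ≤ 2) (hD2 : D_T ≤ 2)
    (hintα : Integrable α T)
    (hintf : Integrable (fun s => ∑ k ∈ Finset.range (γ + 1), α s ^ k) T)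
    (hintKL : Integrable (fun s => ∑ x, p s x * Real.log (p s x / q s x)) T)
    (hintD : Integrable (fun s => -∑ x, p s x * Real.log (q s x)) T) :
    S_T ≥ (∑ k ∈ Finset.range (γ + 1), α_T ^ k) / (1 + (γ : ℝ) * c) ∧
    (∑ k ∈ Finset.range (γ + 1), α_T ^ k) / (1 + (γ : ℝ) * c) ≥
      (∑ k ∈ Finset.range (γ + 1), (1 - Real.sqrt (KL_T / 2)) ^ k) / (1 + (γ : ℝ) * c) ∧
    (∑ k ∈ Finset.range (γ + 1), (1 - Real.sqrt (KL_T / 2)) ^ k) / (1 + (γ : ℝ) * c) ≥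
      (∑ k ∈ Finset.range (γ + 1), (1 - Real.sqrt (D_T / 2)) ^ k) / (1 + (γ : ℝ) * c) :=
  monotone_chain_divergence_speedup_general T p q hp0 hq0 hp1 hq1 hac γ c hc0 α hα S_T hS α_T hαT
    KL_T hKL D_T hD hKL2 hD2 hintα hintf hintKL hintD
end

section
/- Under the hypotheses of Theorem 2 (task T over prefixes with latent posterior u(·|s), verifier p(·|s), drafter q(·|s) on a finite vocabulary V; α_T := E_{s∼T}[Σ_x min(p(x|s), q(x|s))]; r_p := E_{s∼T}[TV(u,p)]; r_q := E_{s∼T}[TV(u,q)]), the task-wise acceptance is sandwiched as 1 − (r_q + r_p) ≤ α_T ≤ 1 − (r_q − r_p). -/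
open MeasureTheory

/-!
Since `p` and `q` both have mass one, `∑ x, min (p x) (q x) = 1 - TV(p, q)` pointwise, and the
triangle inequality for total variation through `u` gives
`TV(u, q) - TV(u, p) ≤ TV(p, q) ≤ TV(u, q) + TV(u, p)`. Integrating over `s ∼ T` yields the
sandwich.
-/

section TotalVariation

variable {V : Type*} [Fintype V]

noncomputable def tvDist (f g : V → ℝ) : ℝ := (1 / 2) * ∑ x, |f x - g x|

theorem tvDist_comm (f g : V → ℝ) : tvDist f g = tvDist g f := by
  simp only [tvDist, abs_sub_comm]

theorem tvDist_triangle (f g h : V → ℝ) : tvDist f h ≤ tvDist f g + tvDist g h := by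
  simp only [tvDist, ← mul_add, ← Finset.sum_add_distrib]
  gcongr with x
  exact abs_sub_le _ _ _

theorem sum_min_eq_one_sub_tvDist {f g : V → ℝ} (hf : ∑ x, f x = 1) (hg : ∑ x, g x = 1) :
    ∑ x, min (f x) (g x) = 1 - tvDist f g := by
  have hmin : ∀ x, min (f x) (g x) = (f x + g x - |f x - g x|) / 2 := fun x => by
    linarith [min_add_max (f x) (g x), max_sub_min_eq_abs' (f x) (g x)]
  simp only [hmin, tvDist, ← Finset.sum_div, Finset.sum_sub_distrib, Finset.sum_add_distrib,
    hf, hg]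
  ring

theorem one_sub_add_tvDist_le_sum_min (f : V → ℝ) {g h : V → ℝ}
    (hg : ∑ x, g x = 1) (hh : ∑ x, h x = 1) :
    1 - (tvDist f h + tvDist f g) ≤ ∑ x, min (g x) (h x) := by
  rw [sum_min_eq_one_sub_tvDist hg hh]
  linarith [tvDist_triangle g f h, tvDist_comm f g]

theorem sum_min_le_one_sub_sub_tvDist (f : V → ℝ) {g h : V → ℝ}
    (hg : ∑ x, g x = 1) (hh : ∑ x, h x = 1) :
    ∑ x, min (g x) (h x) ≤ 1 - (tvDist f h - tvDist f g) := by
  rw [sum_min_eq_one_sub_tvDist hg hh]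
  linarith [tvDist_triangle f g h]

end TotalVariation

section ProbabilityIntegral

variable {Ω : Type*} [MeasurableSpace Ω] {μ : Measure Ω} [IsProbabilityMeasure μ]
  {f g : Ω → ℝ}

theorem integral_one_sub_add (hf : Integrable f μ) (hg : Integrable g μ) :
    ∫ s, 1 - (f s + g s) ∂μ = 1 - (∫ s, f s ∂μ + ∫ s, g s ∂μ) := by
  rw [integral_sub (g := fun s => f s + g s) (integrable_const 1) (hf.add hg),
    integral_add hf hg, integral_const, probReal_univ, one_smul]

theorem integral_one_sub_sub (hf : Integrable f μ) (hg : Integrable g μ) :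
    ∫ s, 1 - (f s - g s) ∂μ = 1 - (∫ s, f s ∂μ - ∫ s, g s ∂μ) := by
  rw [integral_sub (g := fun s => f s - g s) (integrable_const 1) (hf.sub hg),
    integral_sub hf hg, integral_const, probReal_univ, one_smul]

end ProbabilityIntegral

theorem acceptance_sandwich_general {Ω : Type*} [MeasurableSpace Ω]
    (T : Measure Ω) [IsProbabilityMeasure T]
    {V : Type*} [Fintype V]
    (u p q : Ω → V → ℝ)
    (hp1 : ∀ s, ∑ x, p s x = 1) (hq1 : ∀ s, ∑ x, q s x = 1)
    (hintα : Integrable (fun s => ∑ x, min (p s x) (q s x)) T)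
    (hintp : Integrable (fun s => (1 / 2) * ∑ x, |u s x - p s x|) T)
    (hintq : Integrable (fun s => (1 / 2) * ∑ x, |u s x - q s x|) T)
    (r_p r_q α_T : ℝ)
    (hrp : r_p = ∫ s, (1 / 2) * ∑ x, |u s x - p s x| ∂T)
    (hrq : r_q = ∫ s, (1 / 2) * ∑ x, |u s x - q s x| ∂T)
    (hαT : α_T = ∫ s, ∑ x, min (p s x) (q s x) ∂T) :
    1 - (r_q + r_p) ≤ α_T ∧ α_T ≤ 1 - (r_q - r_p) := by
  change Integrable (fun s => tvDist (u s) (p s)) T at hintp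
  change Integrable (fun s => tvDist (u s) (q s)) T at hintq
  subst hrp hrq hαT
  have hint_one := integrable_const (μ := T) (1 : ℝ)
  have lower : ∫ s, 1 - (tvDist (u s) (q s) + tvDist (u s) (p s)) ∂T ≤
      ∫ s, ∑ x, min (p s x) (q s x) ∂T :=
    integral_mono (hint_one.sub (hintq.add hintp)) hintα
      fun s => one_sub_add_tvDist_le_sum_min (u s) (hp1 s) (hq1 s)
  have upper : ∫ s, ∑ x, min (p s x) (q s x) ∂T ≤
      ∫ s, 1 - (tvDist (u s) (q s) - tvDist (u s) (p s)) ∂T :=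
    integral_mono hintα (hint_one.sub (hintq.sub hintp))
      fun s => sum_min_le_one_sub_sub_tvDist (u s) (hp1 s) (hq1 s)
  rw [integral_one_sub_add hintq hintp] at lower
  rw [integral_one_sub_sub hintq hintp] at upper
  exact ⟨lower, upper⟩

/-- Under the hypotheses of Theorem 2, the task-wise acceptance
`α_T := E_{s∼T}[∑ x, min (p s x) (q s x)]` is sandwiched between
`1 - (r_q + r_p)` and `1 - (r_q - r_p)`, where
`r_p := E_{s∼T}[TV(u(·|s), p(·|s))]` and `r_q := E_{s∼T}[TV(u(·|s), q(·|s))]`. -/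
theorem acceptance_sandwich {Ω : Type*} [MeasurableSpace Ω]
    (T : Measure Ω) [IsProbabilityMeasure T]
    {V : Type*} [Fintype V]
    (u p q : Ω → V → ℝ)
    (hu0 : ∀ s x, 0 ≤ u s x) (hp0 : ∀ s x, 0 ≤ p s x) (hq0 : ∀ s x, 0 ≤ q s x)
    (hu1 : ∀ s, ∑ x, u s x = 1) (hp1 : ∀ s, ∑ x, p s x = 1) (hq1 : ∀ s, ∑ x, q s x = 1)
    (hintα : Integrable (fun s => ∑ x, min (p s x) (q s x)) T)
    (hintp : Integrable (fun s => (1 / 2) * ∑ x, |u s x - p s x|) T)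
    (hintq : Integrable (fun s => (1 / 2) * ∑ x, |u s x - q s x|) T)
    (r_p r_q α_T : ℝ)
    (hrp : r_p = ∫ s, (1 / 2) * ∑ x, |u s x - p s x| ∂T)
    (hrq : r_q = ∫ s, (1 / 2) * ∑ x, |u s x - q s x| ∂T)
    (hαT : α_T = ∫ s, ∑ x, min (p s x) (q s x) ∂T) :
    1 - (r_q + r_p) ≤ α_T ∧ α_T ≤ 1 - (r_q - r_p) :=
  acceptance_sandwich_general T u p q hp1 hq1 hintα hintp hintq r_p r_q α_T hrp hrq hαT
end

section
/- Expected tokens per speculative iteration: let γ ≥ 1 be an integer and let X_1, …, X_γ be independent Bernoulli(α) random variables with α ∈ [0,1) (X_k = 1 meaning the k-th drafted token is accepted). Let N := 1 + max{ k ∈ {0,…,γ} : X_1 = ⋯ = X_k = 1 } denote the number of tokens produced in one verifier iteration (the accepted prefix plus one token from the verifier). Then E[N] = Σ_{k=0}^{γ} α^k = (1 − α^{γ+1})/(1 − α). -/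
/-!
Whether the first `k` drafts are all accepted is antitone in `k`, so `N` counts the
`k ∈ {0, …, γ}` for which this happens: `N = ∑_{k=0}^{γ} 1[X_1 = ⋯ = X_k = 1]`. By independence
the `k`-th event has probability `α ^ k`, and linearity of expectation gives the geometric sum.
-/

open MeasureTheory ProbabilityTheory Finset
open scoped ENNReal

namespace Nat

variable {P : ℕ → Prop} [DecidablePred P]

lemma le_findGreatest_iff_of_antitone (hP : Antitone P) (h0 : P 0) {k n : ℕ} (hk : k ≤ n) :
    k ≤ findGreatest P n ↔ P k :=
  ⟨fun h ↦ hP h (findGreatest_spec (zero_le n) h0), le_findGreatest hk⟩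

lemma findGreatest_add_one_eq_card_filter_range (hP : Antitone P) (h0 : P 0) (n : ℕ) :
    findGreatest P n + 1 = #{k ∈ range (n + 1) | P k} := by
  suffices {k ∈ range (n + 1) | P k} = range (findGreatest P n + 1) by rw [this, card_range]
  ext k
  simp only [mem_filter, mem_range, Nat.lt_succ_iff]
  exact ⟨fun ⟨hk, hPk⟩ ↦ (le_findGreatest_iff_of_antitone hP h0 hk).2 hPk,
    fun hk ↦ ⟨hk.trans (findGreatest_le n),
      (le_findGreatest_iff_of_antitone hP h0 (hk.trans (findGreatest_le n))).1 hk⟩⟩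

end Nat

lemma antitone_forall_lt_eq_true {γ : ℕ} (b : Fin γ → Bool) :
    Antitone fun k ↦ ∀ i : Fin γ, (i : ℕ) < k → b i = true :=
  fun _ _ hmk h i hi ↦ h i (hi.trans_le hmk)

namespace ProbabilityTheory.iIndepFun

variable {Ω : Type*} [MeasurableSpace Ω] {μ : Measure Ω} {p : ℝ≥0∞}

lemma measure_forall_mem_eq_true {ι : Type*} {X : ι → Ω → Bool} (hX : iIndepFun X μ)
    (hp : ∀ i, μ {ω | X i ω = true} = p) (s : Finset ι) :
    μ {ω | ∀ i ∈ s, X i ω = true} = p ^ #s := by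
  have hinter : {ω | ∀ i ∈ s, X i ω = true} = ⋂ i ∈ s, X i ⁻¹' {true} := by ext; simp
  rw [hinter, hX.meas_biInter fun i _ ↦ ⟨{true}, trivial, rfl⟩]
  simp [Set.preimage, hp]

lemma measure_forall_lt_eq_true {γ : ℕ} {X : Fin γ → Ω → Bool} (hX : iIndepFun X μ)
    (hp : ∀ i, μ {ω | X i ω = true} = p) {k : ℕ} (hk : k ≤ γ) :
    μ {ω | ∀ i : Fin γ, (i : ℕ) < k → X i ω = true} = p ^ k := by
  simpa [Fin.card_filter_val_lt, hk] using hX.measure_forall_mem_eq_true hp {i | (i : ℕ) < k}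

end ProbabilityTheory.iIndepFun

theorem expected_tokens_per_iteration_general {Ω : Type*} [MeasurableSpace Ω]
    (μ : Measure Ω) [IsProbabilityMeasure μ]
    (γ : ℕ) (α : ℝ) (hα0 : 0 ≤ α) (hα1 : α < 1)
    (X : Fin γ → Ω → Bool)
    (hXmeas : ∀ k, Measurable (X k))
    (hindep : iIndepFun X μ)
    (hbern : ∀ k, μ {ω | X k ω = true} = ENNReal.ofReal α)
    (N : Ω → ℕ)
    (hN : ∀ ω, N ω =
      1 + Nat.findGreatest (fun k => ∀ i : Fin γ, (i : ℕ) < k → X i ω = true) γ) :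
    (∫ ω, (N ω : ℝ) ∂μ) = ∑ k ∈ Finset.range (γ + 1), α ^ k ∧
    (∑ k ∈ Finset.range (γ + 1), α ^ k) = (1 - α ^ (γ + 1)) / (1 - α) := by
  set A : ℕ → Set Ω := fun k ↦ {ω | ∀ i : Fin γ, (i : ℕ) < k → X i ω = true}
  have hA_meas (k : ℕ) : MeasurableSet (A k) := by measurability
  have hA_prob {k : ℕ} (hk : k ≤ γ) : μ.real (A k) = α ^ k := by
    rw [measureReal_def, hindep.measure_forall_lt_eq_true hbern hk, ← ENNReal.ofReal_pow hα0,
      ENNReal.toReal_ofReal (pow_nonneg hα0 k)]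
  have hN_sum (ω : Ω) : (N ω : ℝ) = ∑ k ∈ range (γ + 1), (A k).indicator 1 ω := by
    rw [hN, add_comm, Nat.findGreatest_add_one_eq_card_filter_range
      (antitone_forall_lt_eq_true fun i ↦ X i ω) (fun _ h ↦ absurd h (Nat.not_lt_zero _)),
      natCast_card_filter]
    simp [A, Set.indicator_apply]
  refine ⟨?_, by simpa using geom_sum_Ico' hα1.ne (Nat.zero_le (γ + 1))⟩
  calc ∫ ω, (N ω : ℝ) ∂μ = ∑ k ∈ range (γ + 1), ∫ ω, (A k).indicator 1 ω ∂μ := by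
        simp_rw [hN_sum]
        exact integral_finsetSum _ fun k _ ↦ (integrable_const 1).indicator (hA_meas k)
    _ = ∑ k ∈ range (γ + 1), α ^ k := by
        refine sum_congr rfl fun k hk ↦ ?_
        rw [integral_indicator_one (hA_meas k), hA_prob (Nat.lt_succ_iff.1 (mem_range.1 hk))]

/-- Expected tokens per speculative iteration: let `γ ≥ 1`, let `X 1, …, X γ` be
independent Bernoulli(α) random variables (`X k ω = true` meaning the `k`-th drafted
token is accepted) with `α ∈ [0,1)`, and let
`N ω := 1 + max { k ∈ {0,…,γ} : X 1 ω = ⋯ = X k ω = true }` be the number of tokens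
produced in one verifier iteration (the accepted prefix plus one verifier token). Then
`E[N] = ∑_{k=0}^{γ} α^k = (1 - α^(γ+1))/(1 - α)`. -/
theorem expected_tokens_per_iteration {Ω : Type*} [MeasurableSpace Ω]
    (μ : Measure Ω) [IsProbabilityMeasure μ]
    (γ : ℕ) (hγ : 1 ≤ γ) (α : ℝ) (hα0 : 0 ≤ α) (hα1 : α < 1)
    (X : Fin γ → Ω → Bool)
    (hXmeas : ∀ k, Measurable (X k))
    (hindep : iIndepFun X μ)
    (hbern : ∀ k, μ {ω | X k ω = true} = ENNReal.ofReal α)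
    (N : Ω → ℕ)
    (hN : ∀ ω, N ω =
      1 + Nat.findGreatest (fun k => ∀ i : Fin γ, (i : ℕ) < k → X i ω = true) γ) :
    (∫ ω, (N ω : ℝ) ∂μ) = ∑ k ∈ Finset.range (γ + 1), α ^ k ∧
    (∑ k ∈ Finset.range (γ + 1), α ^ k) = (1 - α ^ (γ + 1)) / (1 - α) :=
  expected_tokens_per_iteration_general μ γ α hα0 hα1 X hXmeas hindep hbern N hN
end
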